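/- With f : ℍ → ℝ⁴ the coordinate isomorphism and π : CL(ℝ⁴) → ℍ as defined, for any quaternions a₁, ..., a_r: π(f(a₁)·f(a₂)···f(a_r)) = a₁·conj(a₂)·a₃·conj(a₄)···, i.e., the Clifford product of the vectors f(aₗ) projects to the alternating product where even-indexed factors are conjugated. -/

import Mathlib

/-! The even Clifford algebra of `ℝ⁴` is `ℍ × ℍ`: with `ψ : ℍ → CL(ℝ⁴)` the inverse of `ι` and
`ω = e₀e₁e₂e₃`, which commutes with the image of `ψ` and squares to `1`, the map
`(p, q) ↦ ψ(p)(1 - ω)/2 + ψ(q)(1 + ω)/2` is multiplicative. Every vector factors as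
`f(a) = W(a, ā) e₀`, and conjugation by `e₀` swaps the two factors of `W`, so
`f(a₁) ⋯ f(a_r) = W(a₁ ā₂ a₃ ⋯, ā₁ a₂ ā₃ ⋯) e₀ʳ`. The projection `π` reads off the first factor
of both `W(p, q)` and `W(p, q) e₀`. -/

open Quaternion

/-- The positive definite quadratic form on `ℝ⁴`. -/
noncomputable def Q4 : QuadraticForm ℝ (Fin 4 → ℝ) :=
  QuadraticMap.weightedSumSquares ℝ (fun _ : Fin 4 => (1 : ℝ))

/-- The standard basis vectors of `ℝ⁴` as vectors in the Clifford algebra. -/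
noncomputable def e (i : Fin 4) : CliffordAlgebra Q4 :=
  CliffordAlgebra.ι Q4 (Pi.single i 1)

def qi : ℍ[ℝ] := ⟨0, 1, 0, 0⟩
def qj : ℍ[ℝ] := ⟨0, 0, 1, 0⟩
def qk : ℍ[ℝ] := ⟨0, 0, 0, 1⟩

/-- The coordinate map `f : ℍ → ℝ⁴ ⊆ CL(ℝ⁴)`. -/
noncomputable def fQ (a : ℍ[ℝ]) : CliffordAlgebra Q4 :=
  CliffordAlgebra.ι Q4 ![a.re, a.imI, a.imJ, a.imK]

namespace QuadraticMap

theorem weightedSumSquares_single {ι R : Type*} [Fintype ι] [DecidableEq ι]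
    [CommRing R] (w : ι → R) (i : ι) (a : R) :
    weightedSumSquares R w (Pi.single i a) = w i * (a * a) := by
  simp [weightedSumSquares_apply, Pi.single_apply]

theorem isOrtho_weightedSumSquares_single {ι R : Type*} [Fintype ι] [DecidableEq ι]
    [CommRing R] (w : ι → R) {i j : ι} (h : i ≠ j) (a b : R) :
    (weightedSumSquares R w).IsOrtho (Pi.single i a) (Pi.single j b) := by
  rw [isOrtho_def]
  simp only [weightedSumSquares_apply, ← Finset.sum_add_distrib, ← smul_add]
  refine Finset.sum_congr rfl fun k _ => ?_
  rcases eq_or_ne k i with rfl | hki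
  · simp [h]
  · simp [hki]

end QuadraticMap

@[simp]
lemma e_mul_self (i : Fin 4) : e i * e i = 1 := by
  rw [e, CliffordAlgebra.ι_sq_scalar, Q4, QuadraticMap.weightedSumSquares_single, mul_one, one_mul,
    map_one]

@[simp]
lemma e_mul_e_mul_self (i : Fin 4) (x : CliffordAlgebra Q4) : e i * (e i * x) = x := by
  rw [← mul_assoc, e_mul_self, one_mul]

@[simp]
lemma e_mul_e_of_lt {i j : Fin 4} (h : j < i) : e i * e j = -(e j * e i) :=
  CliffordAlgebra.ι_mul_ι_comm_of_isOrtho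
    (QuadraticMap.isOrtho_weightedSumSquares_single _ h.ne' 1 1)

@[simp]
lemma e_mul_e_mul_of_lt {i j : Fin 4} (h : j < i) (x : CliffordAlgebra Q4) :
    e i * (e j * x) = -(e j * (e i * x)) :=
  CliffordAlgebra.ι_mul_ι_mul_of_isOrtho x
    (QuadraticMap.isOrtho_weightedSumSquares_single _ h.ne' 1 1)

noncomputable def quatBasis : QuaternionAlgebra.Basis (CliffordAlgebra Q4) (-1 : ℝ) 0 (-1) where
  i := -(e 2 * e 3)
  j := e 1 * e 3
  k := -(e 1 * e 2)
  i_mul_i := by simp [mul_assoc]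
  j_mul_j := by simp [mul_assoc]
  i_mul_j := by simp [mul_assoc]
  j_mul_i := by simp [mul_assoc]

/-- The inverse `ψ` of `ι : H → ℍ`. -/
noncomputable def quatToClifford : ℍ[ℝ] →ₐ[ℝ] CliffordAlgebra Q4 := quatBasis.liftHom

noncomputable def pseudoscalar : CliffordAlgebra Q4 := e 0 * e 1 * e 2 * e 3

/-- `W(p, q)`, the isomorphism `ℍ × ℍ ≃ CL⁺(ℝ⁴)`. -/
noncomputable def ofQuatPair (p q : ℍ[ℝ]) : CliffordAlgebra Q4 :=
  (1 / 2 : ℝ) • (quatToClifford p * (1 - pseudoscalar) + quatToClifford q * (1 + pseudoscalar))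

lemma pseudoscalar_mul_self : pseudoscalar * pseudoscalar = 1 := by
  simp [pseudoscalar, mul_assoc]

lemma e0_mul_pseudoscalar : e 0 * pseudoscalar = -(pseudoscalar * e 0) := by
  simp [pseudoscalar, mul_assoc]

lemma quatToClifford_apply (x : ℍ[ℝ]) : quatToClifford x =
    x.re • 1 - x.imI • (e 2 * e 3) + x.imJ • (e 1 * e 3) - x.imK • (e 1 * e 2) := by
  change quatBasis.lift x = _
  simp only [QuaternionAlgebra.Basis.lift, Algebra.algebraMap_eq_smul_one, quatBasis, smul_neg,
    ← sub_eq_add_neg]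

lemma commute_pseudoscalar_quatToClifford (x : ℍ[ℝ]) :
    Commute pseudoscalar (quatToClifford x) := by
  rw [Commute, SemiconjBy, quatToClifford_apply]
  simp [pseudoscalar, mul_add, add_mul, mul_sub, sub_mul, mul_assoc]

lemma commute_e0_quatToClifford (x : ℍ[ℝ]) : Commute (e 0) (quatToClifford x) := by
  rw [Commute, SemiconjBy, quatToClifford_apply]
  simp [mul_add, add_mul, mul_sub, sub_mul, mul_assoc]

lemma ofQuatPair_one : ofQuatPair 1 1 = 1 := by
  rw [ofQuatPair, map_one, one_mul, one_mul, sub_add_add_cancel]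
  module

lemma ofQuatPair_mul (p q p' q' : ℍ[ℝ]) :
    ofQuatPair p q * ofQuatPair p' q' = ofQuatPair (p * p') (q * q') := by
  have comm (x : ℍ[ℝ]) := commute_pseudoscalar_quatToClifford x
  have merge (x x' : ℍ[ℝ]) (y : CliffordAlgebra Q4) :
      quatToClifford x * (quatToClifford x' * y) = quatToClifford (x * x') * y := by
    rw [map_mul, mul_assoc]
  simp only [ofQuatPair, smul_mul_smul, mul_add, add_mul, mul_sub, sub_mul, mul_one,
    mul_assoc, (comm _).eq, (comm _).left_comm, ← map_mul, merge, pseudoscalar_mul_self]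
  module

lemma e0_mul_ofQuatPair (p q : ℍ[ℝ]) : e 0 * ofQuatPair p q = ofQuatPair q p * e 0 := by
  have comm (x : ℍ[ℝ]) := commute_e0_quatToClifford x
  simp only [ofQuatPair, mul_smul_comm, smul_mul_assoc, mul_add, add_mul, mul_sub, sub_mul,
    mul_one, mul_assoc, (comm _).eq, (comm _).left_comm, e0_mul_pseudoscalar, mul_neg]
  module

lemma fQ_eq_sum (a : ℍ[ℝ]) : fQ a = a.re • e 0 + a.imI • e 1 + a.imJ • e 2 + a.imK • e 3 := by
  simp only [fQ, e, ← map_smul, ← map_add]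
  congr 1
  ext i
  fin_cases i <;> simp

lemma fQ_eq_ofQuatPair_mul_e0 (a : ℍ[ℝ]) : fQ a = ofQuatPair a (star a) * e 0 := by
  simp only [fQ_eq_sum, ofQuatPair, quatToClifford_apply, pseudoscalar, Quaternion.re_star,
    Quaternion.imI_star, Quaternion.imJ_star, Quaternion.imK_star, neg_smul, smul_mul_assoc,
    mul_add, add_mul, mul_sub, sub_mul, smul_sub, smul_add, one_mul, mul_one,
    mul_assoc, mul_neg, neg_mul, neg_neg, e_mul_self, e_mul_e_mul_self, e_mul_e_of_lt,
    e_mul_e_mul_of_lt, Fin.reduceLT]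
  module

section Projection

variable {π : CliffordAlgebra Q4 →ₗ[ℝ] ℍ[ℝ]}

lemma map_ofQuatPair (h1 : π 1 = 1) (h4 : π (e 0 * e 1 * e 2 * e 3) = -1)
    (h6 : π (e 0 * e 1) = -qi) (h7 : π (e 2 * e 3) = -qi)
    (h10 : π (e 0 * e 2) = -qj) (h11 : π (e 1 * e 3) = qj)
    (h14 : π (e 0 * e 3) = -qk) (h15 : π (e 1 * e 2) = -qk) (p q : ℍ[ℝ]) :
    π (ofQuatPair p q) = p := by
  simp only [mul_assoc] at h4
  simp only [ofQuatPair, quatToClifford_apply, pseudoscalar, smul_mul_assoc, mul_add, add_mul,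
    mul_sub, sub_mul, one_mul, mul_one, mul_assoc, mul_neg, neg_neg, e_mul_self, e_mul_e_mul_self,
    e_mul_e_mul_of_lt, Fin.reduceLT, map_add, map_sub, map_smul, map_neg,
    h1, h4, h6, h7, h10, h11, h14, h15]
  ext <;> simp <;> simp [qi, qj, qk] <;> ring

lemma map_ofQuatPair_mul_e0 (h2 : π (e 0) = 1) (h3 : π (e 1 * e 2 * e 3) = 1)
    (h5 : π (e 1) = qi) (h8 : π (e 0 * e 2 * e 3) = -qi)
    (h9 : π (e 2) = qj) (h12 : π (e 0 * e 1 * e 3) = qj)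
    (h13 : π (e 3) = qk) (h16 : π (e 0 * e 1 * e 2) = -qk) (p q : ℍ[ℝ]) :
    π (ofQuatPair p q * e 0) = p := by
  simp only [mul_assoc] at h3 h8 h12 h16
  simp only [ofQuatPair, quatToClifford_apply, pseudoscalar, smul_mul_assoc, mul_add, add_mul,
    mul_sub, sub_mul, one_mul, mul_one, mul_assoc, mul_neg, neg_mul, neg_neg, e_mul_self,
    e_mul_e_mul_self, e_mul_e_of_lt, e_mul_e_mul_of_lt, Fin.reduceLT, map_add, map_sub, map_smul,
    map_neg, h2, h3, h5, h8, h9, h12, h13, h16]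
  ext <;> simp <;> simp [qi, qj, qk] <;> ring

end Projection

lemma e0_pow_mul_ofQuatPair (n : ℕ) (p q : ℍ[ℝ]) :
    e 0 ^ n * ofQuatPair p q =
      ofQuatPair (if Even n then p else q) (if Even n then q else p) * e 0 ^ n := by
  induction n with
  | zero => simp
  | succ n ih =>
    rw [pow_succ', mul_assoc, ih, ← mul_assoc, e0_mul_ofQuatPair, mul_assoc, ← pow_succ']
    by_cases hn : Even n <;> simp [hn, Nat.even_add_one]

lemma e0_pow_of_even {n : ℕ} (hn : Even n) : e 0 ^ n = 1 := by
  obtain ⟨k, rfl⟩ := hn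
  rw [← two_mul, pow_mul, sq, e_mul_self, one_pow]

lemma e0_pow_of_odd {n : ℕ} (hn : Odd n) : e 0 ^ n = e 0 := by
  obtain ⟨k, rfl⟩ := hn
  rw [pow_succ, pow_mul, sq, e_mul_self, one_pow, one_mul]

def altStarProd {R : Type*} [Monoid R] [Star R] {r : ℕ} (a : Fin r → R) : R :=
  (List.ofFn fun l : Fin r => if Even (l : ℕ) then a l else star (a l)).prod

lemma altStarProd_succ {R : Type*} [Monoid R] [Star R] {r : ℕ} (a : Fin (r + 1) → R) :
    altStarProd a = altStarProd (fun l : Fin r => a l.castSucc) *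
      if Even r then a (Fin.last r) else star (a (Fin.last r)) := by
  simp only [altStarProd, List.ofFn_succ', List.prod_concat, Fin.val_castSucc, Fin.val_last]

lemma prod_fQ_eq_ofQuatPair_mul_e0_pow {r : ℕ} (a : Fin r → ℍ[ℝ]) :
    (List.ofFn fun l : Fin r => fQ (a l)).prod =
      ofQuatPair (altStarProd a) (altStarProd fun l => star (a l)) * e 0 ^ r := by
  induction r with
  | zero => simp [altStarProd, ofQuatPair_one]
  | succ r ih =>
    rw [List.ofFn_succ', List.prod_concat, ih, altStarProd_succ, altStarProd_succ, mul_assoc,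
      fQ_eq_ofQuatPair_mul_e0, ← mul_assoc (e 0 ^ r), e0_pow_mul_ofQuatPair, mul_assoc,
      ← pow_succ, ← mul_assoc, ofQuatPair_mul]
    by_cases hr : Even r <;> simp [hr]

/-- The projection of a Clifford product of vectors `f(a₁) ⋯ f(a_r)` is the alternating
quaternion product `a₁ ⬝ conj a₂ ⬝ a₃ ⬝ conj a₄ ⋯`. -/
theorem pi_clifford_product_of_vectors (π : CliffordAlgebra Q4 →ₗ[ℝ] ℍ[ℝ])
    (h1 : π 1 = 1) (h2 : π (e 0) = 1) (h3 : π (e 1 * e 2 * e 3) = 1)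
    (h4 : π (e 0 * e 1 * e 2 * e 3) = -1)
    (h5 : π (e 1) = qi) (h6 : π (e 0 * e 1) = -qi) (h7 : π (e 2 * e 3) = -qi)
    (h8 : π (e 0 * e 2 * e 3) = -qi)
    (h9 : π (e 2) = qj) (h10 : π (e 0 * e 2) = -qj) (h11 : π (e 1 * e 3) = qj)
    (h12 : π (e 0 * e 1 * e 3) = qj)
    (h13 : π (e 3) = qk) (h14 : π (e 0 * e 3) = -qk) (h15 : π (e 1 * e 2) = -qk)
    (h16 : π (e 0 * e 1 * e 2) = -qk) :
    ∀ (r : ℕ), 0 < r → ∀ a : Fin r → ℍ[ℝ],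
      π (List.ofFn fun l : Fin r => fQ (a l)).prod =
        (List.ofFn fun l : Fin r => if Even (l : ℕ) then a l else star (a l)).prod := by
  intro r _ a
  rw [prod_fQ_eq_ofQuatPair_mul_e0_pow]
  rcases Nat.even_or_odd r with hr | hr
  · rw [e0_pow_of_even hr, mul_one, map_ofQuatPair h1 h4 h6 h7 h10 h11 h14 h15]
    rfl
  · rw [e0_pow_of_odd hr, map_ofQuatPair_mul_e0 h2 h3 h5 h8 h9 h12 h13 h16]
    rfl
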